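/- arXiv:2301.06997 — 4 statements merged into one kernel-verified Lean document; each statement's English description precedes it below -/
import Mathlib

section
/- Let G be a free abelian group of rank k densely embedded in an n-dimensional real vector space X with d = k - n ≥ 1, let F ⊂ ℚG be a finite set of points each of which is a rational multiple combination of elements of G (i.e., NF ⊂ G for some positive integer N), and suppose G is Diophantine. Then G is inhomogeneously Diophantine with respect to F: there exists c > 0 such that for all f ∈ F and g ∈ G with g ≠ f, ‖g - f‖ ≥ c·η(g)^{-d/n}. -/
/-- The lattice norm of `v ∈ ℤᵏ`. -/
noncomputable def latNorm {k : ℕ} (v : Fin k → ℤ) : ℝ :=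
  ((Finset.univ.sup fun i => (v i).natAbs : ℕ) : ℝ)

/-- Homogeneous Diophantine property of a rank-`k` free abelian subgroup. -/
def IsDiophantine {X : Type*} [NormedAddCommGroup X] {k : ℕ}
    (G : AddSubgroup X) (e : G ≃+ (Fin k → ℤ)) (δ : ℝ) : Prop :=
  ∃ c : ℝ, 0 < c ∧ ∀ g : G, g ≠ 0 → ‖(g : X)‖ ≥ c * (latNorm (e g)) ^ (-δ)

lemma latNorm_nonneg {k : ℕ} (v : Fin k → ℤ) : 0 ≤ latNorm v := Nat.cast_nonneg _

lemma one_le_latNorm {k : ℕ} {v : Fin k → ℤ} (hv : v ≠ 0) : 1 ≤ latNorm v := by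
  obtain ⟨i, hi⟩ : ∃ i, v i ≠ 0 := by
    by_contra h; push_neg at h; exact hv (funext h)
  have h1 : 1 ≤ (v i).natAbs := Nat.one_le_iff_ne_zero.2 (Int.natAbs_ne_zero.2 hi)
  have := Finset.le_sup (f := fun i => (v i).natAbs) (Finset.mem_univ i)
  unfold latNorm
  exact_mod_cast le_trans h1 this

lemma abs_le_latNorm {k : ℕ} (v : Fin k → ℤ) (i : Fin k) :
    ((v i).natAbs : ℝ) ≤ latNorm v := by
  unfold latNorm
  exact_mod_cast Finset.le_sup (f := fun i => (v i).natAbs) (Finset.mem_univ i)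

lemma latNorm_le {k : ℕ} {v : Fin k → ℤ} {M : ℝ}
    (h : ∀ i, ((v i).natAbs : ℝ) ≤ M) (hM : 0 ≤ M) : latNorm v ≤ M := by
  unfold latNorm
  rcases isEmpty_or_nonempty (Fin k) with hk | hk
  · simp [Finset.univ_eq_empty, hM]
  · obtain ⟨i, _, hi⟩ := Finset.exists_mem_eq_sup Finset.univ Finset.univ_nonempty
      (fun i => (v i).natAbs)
    rw [hi]
    exact h i

/-- Let `G` be a rank-`k` free abelian group densely embedded in an `n`-dimensional real
vector space `X` with `d = k - n ≥ 1`, let `F ⊂ ℚG` be finite (i.e. `N • f ∈ G` for all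
`f ∈ F` for some positive integer `N`), and suppose `G` is Diophantine. Then `G` is
inhomogeneously Diophantine with respect to `F`: there exists `c > 0` such that for all
`f ∈ F` and `g ∈ G` with `g ≠ f`, `‖g - f‖ ≥ c · η(g)^(-d/n)`. -/
theorem inhomogeneous_diophantine_of_diophantine {X : Type*} [NormedAddCommGroup X]
    [NormedSpace ℝ X] [FiniteDimensional ℝ X] {k n d : ℕ}
    (hn : Module.finrank ℝ X = n) (hd : k = n + d) (hd1 : 1 ≤ d)
    (G : AddSubgroup X) (e : G ≃+ (Fin k → ℤ)) (hdense : Dense (G : Set X))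
    (F : Set X) (hF : F.Finite)
    (hrat : ∃ N : ℕ, 0 < N ∧ ∀ f ∈ F, (N : ℤ) • f ∈ G)
    (hdio : IsDiophantine G e ((d : ℝ) / n)) :
    ∃ c : ℝ, 0 < c ∧ ∀ f ∈ F, ∀ g : G, (g : X) ≠ f →
      ‖(g : X) - f‖ ≥ c * (latNorm (e g)) ^ (-((d : ℝ) / n)) := by
  classical
  obtain ⟨N, hN, hNF⟩ := hrat
  obtain ⟨c, hc, hcb⟩ := hdio
  -- `n` is positive
  have hn1 : 0 < n := by
    rcases Nat.eq_zero_or_pos n with h0 | h; swap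
    · exact h
    exfalso
    rw [h0] at hn
    have hsX : Subsingleton X := Module.finrank_zero_iff.mp hn
    have hsG : Subsingleton G := ⟨fun a b => Subtype.ext (Subsingleton.elim _ _)⟩
    have hk : 0 < k := by omega
    have h1 : (fun _ : Fin k => (1 : ℤ)) = (fun _ => 0) := by
      have := Subsingleton.elim (e.symm (fun _ => 1)) (e.symm (fun _ => 0))
      have h2 := congrArg e this
      simpa using h2
    have := congrFun h1 ⟨0, hk⟩
    norm_num at this
  set δ : ℝ := (d : ℝ) / n with hδdef
  have hδ : 0 < δ := div_pos (by exact_mod_cast hd1) (by exact_mod_cast hn1)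
  -- bound on the lattice norms of `N • f`
  set φ : X → ℝ := fun f => if h : (N : ℤ) • f ∈ G then latNorm (e ⟨(N : ℤ) • f, h⟩) else 0
    with hφdef
  obtain ⟨M, hM⟩ := (hF.image φ).bddAbove
  set M' : ℝ := max M 0 with hM'def
  have hM'0 : 0 ≤ M' := le_max_right _ _
  have hNM' : (0 : ℝ) < N + M' := by positivity
  refine ⟨c * ((N + M') ^ δ)⁻¹ / N, by positivity, ?_⟩
  intro f hf g hg
  by_cases hg0 : g = 0
  · subst hg0
    have he0 : latNorm (e 0) = 0 := by
      simp [latNorm, map_zero]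
    rw [he0, Real.zero_rpow (neg_ne_zero.2 hδ.ne')]
    simpa using norm_nonneg ((0 : X) - f)
  · set fG : G := ⟨(N : ℤ) • f, hNF f hf⟩ with hfGdef
    set h : G := (N : ℤ) • g - fG with hhdef
    have hh0 : h ≠ 0 := by
      intro hcon
      apply hg
      have : ((h : X)) = 0 := by rw [hcon]; rfl
      have hXsub : (N : ℝ) • ((g : X) - f) = 0 := by
        have : (N : ℤ) • (g : X) - (N : ℤ) • f = 0 := this
        rw [smul_sub]
        rw [← Int.cast_smul_eq_zsmul ℝ (N : ℤ) (g : X), ← Int.cast_smul_eq_zsmul ℝ (N : ℤ) f]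
          at this
        simpa using this
      have hN0 : (N : ℝ) ≠ 0 := by positivity
      have := (smul_eq_zero.mp hXsub).resolve_left hN0
      exact sub_eq_zero.mp this
    set L : ℝ := latNorm (e g) with hLdef
    set H : ℝ := latNorm (e h) with hHdef
    have hL1 : 1 ≤ L := one_le_latNorm (fun hc0 => hg0 (by
      have := congrArg e.symm hc0
      simpa using this))
    have hL0 : 0 < L := lt_of_lt_of_le one_pos hL1
    have hH1 : 1 ≤ H := one_le_latNorm (fun hc0 => hh0 (by
      have := congrArg e.symm hc0
      simpa using this))
    have hH0 : 0 < H := lt_of_lt_of_le one_pos hH1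
    -- bound `H ≤ (N + M') * L`
    have hφf : φ f ≤ M' := le_trans (hM (Set.mem_image_of_mem φ hf)) (le_max_left _ _)
    have hφval : φ f = latNorm (e fG) := by
      rw [hφdef]; simp only; rw [dif_pos (hNF f hf)]
    have hHle : H ≤ (N + M') * L := by
      have heh : e h = (N : ℤ) • (e g) - e fG := by
        rw [hhdef, map_sub, map_zsmul]
      have : ∀ i, (((e h) i).natAbs : ℝ) ≤ (N + M') * L := by
        intro i
        have h1 : ((e h) i).natAbs ≤ ((((N : ℤ) • (e g)) i).natAbs) + ((e fG) i).natAbs := by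
          rw [heh]
          exact Int.natAbs_sub_le _ _
        have h2 : ((((N : ℤ) • (e g)) i).natAbs : ℝ) = N * ((e g i).natAbs : ℝ) := by
          simp [Int.natAbs_mul]
        have h3 : ((e g i).natAbs : ℝ) ≤ L := abs_le_latNorm _ i
        have h4 : ((e fG i).natAbs : ℝ) ≤ M' := by
          refine le_trans (abs_le_latNorm _ i) ?_
          rw [← hφval]; exact hφf
        calc (((e h) i).natAbs : ℝ)
            ≤ ((((N : ℤ) • (e g)) i).natAbs : ℝ) + ((e fG i).natAbs : ℝ) := by
              exact_mod_cast h1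
          _ ≤ N * L + M' * 1 := by
              rw [h2, mul_one]
              exact add_le_add (by nlinarith [show (0:ℝ) ≤ (N:ℝ) by positivity]) h4
          _ ≤ N * L + M' * L := by nlinarith
          _ = (N + M') * L := by ring
      exact latNorm_le this (by positivity)
    -- use the Diophantine property
    have hdb := hcb h hh0
    have hhX : ((h : X)) = (N : ℝ) • ((g : X) - f) := by
      have : ((h : X)) = (N : ℤ) • (g : X) - (N : ℤ) • f := rfl
      rw [this, smul_sub, ← Int.cast_smul_eq_zsmul ℝ (N : ℤ) (g : X),
        ← Int.cast_smul_eq_zsmul ℝ (N : ℤ) f]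
      push_cast
      ring_nf
    have hnorm : ‖(h : X)‖ = N * ‖(g : X) - f‖ := by
      rw [hhX, norm_smul]
      simp [abs_of_nonneg (show (0:ℝ) ≤ (N:ℝ) by positivity)]
    -- rpow manipulations
    have hrp1 : ((N + M') * L) ^ (-δ) ≤ H ^ (-δ) := by
      rw [Real.rpow_neg (by positivity), Real.rpow_neg hH0.le]
      exact inv_anti₀ (Real.rpow_pos_of_pos hH0 δ)
        (Real.rpow_le_rpow hH0.le hHle hδ.le)
    have hrp2 : ((N + M') * L) ^ (-δ) = ((N + M') ^ δ)⁻¹ * L ^ (-δ) := by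
      rw [Real.mul_rpow hNM'.le hL0.le, Real.rpow_neg hNM'.le]
    have key : N * ‖(g : X) - f‖ ≥ c * ((N + M') ^ δ)⁻¹ * L ^ (-δ) := by
      calc N * ‖(g : X) - f‖ = ‖(h : X)‖ := hnorm.symm
        _ ≥ c * H ^ (-δ) := hdb
        _ ≥ c * (((N + M') * L) ^ (-δ)) := by
            exact mul_le_mul_of_nonneg_left hrp1 hc.le
        _ = c * ((N + M') ^ δ)⁻¹ * L ^ (-δ) := by rw [hrp2]; ring
    have heq : c * ((N + M') ^ δ)⁻¹ / N * L ^ (-δ)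
        = (c * ((N + M') ^ δ)⁻¹ * L ^ (-δ)) / N := by ring
    rw [ge_iff_le, heq, div_le_iff₀ (by positivity : (0:ℝ) < (N:ℝ))]
    linarith [key]
end

section
/- A subset W ⊂ ℝⁿ is polytopal (compact, equal to the closure of its interior, with boundary contained in a finite union of properly supporting hyperplanes) if and only if W is a finite union of convex polytopes, each compact with nonempty interior. -/
open Set

variable {n : ℕ}

/-- A hyperplane `H` (level set of a nonzero linear functional) is properly supporting for
`W` if near some point `w ∈ H`, `W` coincides with one of the closed half-spaces of `H`. -/
def ProperlySupporting (W H : Set (EuclideanSpace ℝ (Fin n))) : Prop :=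
  ∃ (f : EuclideanSpace ℝ (Fin n) →ₗ[ℝ] ℝ) (c : ℝ), f ≠ 0 ∧ H = {x | f x = c} ∧
    ∃ w ∈ H, ∃ U : Set (EuclideanSpace ℝ (Fin n)), IsOpen U ∧ w ∈ U ∧
      (W ∩ U = {x | f x ≤ c} ∩ U ∨ W ∩ U = {x | c ≤ f x} ∩ U)

/-- `W` is polytopal if it is compact, equal to the closure of its interior, and its
boundary is contained in a finite union of properly supporting hyperplanes. -/
def IsPolytopal (W : Set (EuclideanSpace ℝ (Fin n))) : Prop :=
  IsCompact W ∧ W = closure (interior W) ∧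
    ∃ 𝓗 : Set (Set (EuclideanSpace ℝ (Fin n))), 𝓗.Finite ∧
      (∀ H ∈ 𝓗, ProperlySupporting W H) ∧ frontier W ⊆ ⋃₀ 𝓗

/-- A convex polytope: a compact intersection of finitely many closed half-spaces with
nonempty interior. -/
def IsConvexPolytope (C : Set (EuclideanSpace ℝ (Fin n))) : Prop :=
  IsCompact C ∧ (interior C).Nonempty ∧
    ∃ s : Finset ((EuclideanSpace ℝ (Fin n) →ₗ[ℝ] ℝ) × ℝ),
      C = ⋂ p ∈ s, {x | p.1 x ≤ p.2}

/-!
A finite union of convex polytopes is compact, the closure of its interior, and its frontier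
lies on the finitely many facet hyperplanes. Conversely, the hyperplanes covering the frontier of
`W` cut space into open convex cells; a cell meeting `W` is connected and misses the frontier, so
it lies in `W`, and `W` is the union of the closures of these cells, which are convex polytopes.

So both sides amount to: `W` is compact, regular closed, and its frontier lies on finitely many
hyperplanes. The real work is to see that the properly supporting ones among them already cover
the frontier. Near a frontier point lying on only one hyperplane `H`, the two open half-balls cut
out by `H` miss the frontier, hence each lies in `W` or in its complement, and `W` is locally a
half-space. If some frontier point `x` lay on no properly supporting hyperplane, every frontier
point near `x` would lie on two distinct hyperplanes. But a segment from a generic interior point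
of `W` near `x` to a generic exterior point near `x` crosses the frontier while missing all these
codimension-two intersections.
-/

open Filter Topology

section Topology

variable {X : Type*} [TopologicalSpace X]

theorem IsPreconnected.inter_frontier_nonempty {s t : Set X} (hs : IsPreconnected s)
    (hst : (s ∩ t).Nonempty) (hst' : (s \ t).Nonempty) : (s ∩ frontier t).Nonempty := by
  by_contra h
  rw [not_nonempty_iff_eq_empty, ← disjoint_iff_inter_eq_empty] at h
  have hcover : s ⊆ interior t ∪ (closure t)ᶜ := fun x hx => by
    by_cases hxt : x ∈ interior t
    · exact Or.inl hxt
    · exact Or.inr fun hcl => h.ne_of_mem hx ⟨hcl, hxt⟩ rfl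
  rcases hs.subset_or_subset isOpen_interior isClosed_closure.isOpen_compl
      (disjoint_compl_right.mono_left interior_subset_closure) hcover with h' | h'
  · obtain ⟨x, hxs, hxt⟩ := hst'
    exact hxt (interior_subset (h' hxs))
  · obtain ⟨x, hxs, hxt⟩ := hst
    exact h' hxs (subset_closure hxt)

theorem IsPreconnected.subset_or_disjoint_of_disjoint_frontier {s t : Set X}
    (hs : IsPreconnected s) (h : Disjoint s (frontier t)) : s ⊆ t ∨ Disjoint s t := by
  by_contra! hst
  rw [← sdiff_nonempty, not_disjoint_iff_nonempty_inter] at hst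
  obtain ⟨x, hxs, hxt⟩ := hs.inter_frontier_nonempty hst.2 hst.1
  exact h.ne_of_mem hxs hxt rfl

theorem closure_interior_sUnion {𝓒 : Set (Set X)} (hfin : 𝓒.Finite)
    (h : ∀ C ∈ 𝓒, closure (interior C) = C) : closure (interior (⋃₀ 𝓒)) = ⋃₀ 𝓒 := by
  refine subset_antisymm (closure_minimal interior_subset ?_) (sUnion_subset fun C hC => ?_)
  · rw [sUnion_eq_biUnion]
    exact hfin.isClosed_biUnion fun C hC => h C hC ▸ isClosed_closure
  · exact h C hC ▸ closure_mono (interior_mono (subset_sUnion_of_mem hC))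

end Topology

theorem LinearMap.apply_eq_of_mem_segment_of_ne {V : Type*} [AddCommGroup V] [Module ℝ V]
    (φ : V →ₗ[ℝ] ℝ) {a b w : V} (hw : w ∈ segment ℝ a b) (hwa : w ≠ a) (h : φ w = φ a) :
    φ b = φ a := by
  rw [segment_eq_image'] at hw
  obtain ⟨t, -, rfl⟩ := hw
  have ht : t ≠ 0 := by rintro rfl; simp at hwa
  simp only [map_add, map_smul, map_sub, smul_eq_mul, add_eq_left, mul_eq_zero, ht,
    false_or, sub_eq_zero] at h
  exact h

theorem LinearMap.exists_ne_zero_forall_eq_of_setOf_ne {V : Type*} [AddCommGroup V] [Module ℝ V]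
    {f g : V →ₗ[ℝ] ℝ} {c d : ℝ} (hg : g ≠ 0) (hne : {x | f x = c} ≠ {x | g x = d}) {a : V}
    (ha : f a ≠ c) :
    ∃ φ : V →ₗ[ℝ] ℝ, φ ≠ 0 ∧ ∀ x, f x = c → g x = d → φ x = φ a := by
  refine ⟨(c - f a) • g - (d - g a) • f, fun hφ => hne ?_, fun x hx hx' => ?_⟩
  · have key : ∀ x, (c - f a) * g x = (d - g a) * f x := fun x => by
      simpa [sub_eq_zero] using LinearMap.congr_fun hφ x
    have hca : c - f a ≠ 0 := sub_ne_zero.2 (Ne.symm ha)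
    have hdb : d - g a ≠ 0 := by
      intro h0
      refine hg (LinearMap.ext fun x => ?_)
      simpa [h0, hca] using key x
    ext x
    constructor
    · intro (hx : f x = c)
      exact mul_left_cancel₀ hca (by linear_combination key x - key a + (d - g a) * hx)
    · intro (hx : g x = d)
      exact mul_left_cancel₀ hdb (by linear_combination key a - key x + (c - f a) * hx)
  · simp only [sub_apply, smul_apply, smul_eq_mul, hx, hx']
    ring

theorem convex_biInter_setOf_le {V : Type*} [AddCommGroup V] [Module ℝ V]
    (t : Finset ((V →ₗ[ℝ] ℝ) × ℝ)) : Convex ℝ (⋂ q ∈ t, {x : V | q.1 x ≤ q.2}) :=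
  convex_iInter₂ fun q _ => convex_halfSpace_le q.1.isLinear q.2

theorem convex_biInter_setOf_lt {V : Type*} [AddCommGroup V] [Module ℝ V]
    (t : Finset ((V →ₗ[ℝ] ℝ) × ℝ)) : Convex ℝ (⋂ q ∈ t, {x : V | q.1 x < q.2}) :=
  convex_iInter₂ fun q _ => convex_halfSpace_lt q.1.isLinear q.2

section Hyperplanes

variable {E : Type*} [NormedAddCommGroup E] [NormedSpace ℝ E] [FiniteDimensional ℝ E]
  {f : E →ₗ[ℝ] ℝ}

theorem LinearMap.closure_preimage_of_ne_zero (hf : f ≠ 0) (s : Set ℝ) :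
    closure (f ⁻¹' s) = f ⁻¹' closure s :=
  (LinearMap.toContinuousLinearMap f).closure_preimage (LinearMap.surjective_of_ne_zero hf) s

theorem LinearMap.interior_preimage_of_ne_zero (hf : f ≠ 0) (s : Set ℝ) :
    interior (f ⁻¹' s) = f ⁻¹' interior s :=
  (LinearMap.toContinuousLinearMap f).interior_preimage (LinearMap.surjective_of_ne_zero hf) s

theorem LinearMap.dense_setOf_ne (hf : f ≠ 0) (c : ℝ) : Dense {x | f x ≠ c} := by
  rw [dense_iff_closure_eq]
  change closure (f ⁻¹' {c}ᶜ) = univ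
  rw [f.closure_preimage_of_ne_zero hf, closure_compl_singleton, preimage_univ]

theorem dense_setOf_forall_ne {ι : Type*} {s : Set ι} (hs : s.Finite) {φ : ι → E →ₗ[ℝ] ℝ}
    (hφ : ∀ i ∈ s, φ i ≠ 0) (c : ι → ℝ) : Dense {x | ∀ i ∈ s, φ i x ≠ c i} := by
  simpa only [ofPred_forall] using dense_biInter_of_isOpen
    (fun i _ => isOpen_ne_fun (φ i).continuous_of_finiteDimensional continuous_const) hs.countable
    fun i hi => (φ i).dense_setOf_ne (hφ i hi) (c i)

theorem interior_biInter_setOf_le {t : Finset ((E →ₗ[ℝ] ℝ) × ℝ)} (ht : ∀ q ∈ t, q.1 ≠ 0) :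
    interior (⋂ q ∈ t, {x | q.1 x ≤ q.2}) = ⋂ q ∈ t, {x | q.1 x < q.2} := by
  rw [Finset.interior_iInter]
  refine iInter₂_congr fun q hq => ?_
  change interior (q.1 ⁻¹' Iic q.2) = q.1 ⁻¹' Iio q.2
  rw [q.1.interior_preimage_of_ne_zero (ht q hq), interior_Iic]

theorem closure_biInter_setOf_lt {t : Finset ((E →ₗ[ℝ] ℝ) × ℝ)} (ht : ∀ q ∈ t, q.1 ≠ 0)
    (hne : (⋂ q ∈ t, {x | q.1 x < q.2}).Nonempty) :
    closure (⋂ q ∈ t, {x | q.1 x < q.2}) = ⋂ q ∈ t, {x | q.1 x ≤ q.2} := by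
  have hclosed : IsClosed (⋂ q ∈ t, {x : E | q.1 x ≤ q.2}) :=
    isClosed_biInter fun q _ => isClosed_le q.1.continuous_of_finiteDimensional continuous_const
  rw [← interior_biInter_setOf_le ht] at hne ⊢
  rw [(convex_biInter_setOf_le t).closure_interior_eq_closure_of_nonempty_interior hne,
    hclosed.closure_eq]

end Hyperplanes

def FrontierCoveredByHyperplanes {E : Type*} [TopologicalSpace E] [AddCommGroup E] [Module ℝ E]
    (W : Set E) : Prop :=
  ∃ s : Set ((E →ₗ[ℝ] ℝ) × ℝ), s.Finite ∧ (∀ p ∈ s, p.1 ≠ 0) ∧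
    ∀ x ∈ frontier W, ∃ p ∈ s, p.1 x = p.2

theorem frontierCoveredByHyperplanes_sUnion {E : Type*} [TopologicalSpace E] [AddCommGroup E]
    [Module ℝ E] {𝓒 : Set (Set E)} (hfin : 𝓒.Finite) (hclosed : ∀ C ∈ 𝓒, IsClosed C)
    (h : ∀ C ∈ 𝓒, FrontierCoveredByHyperplanes C) : FrontierCoveredByHyperplanes (⋃₀ 𝓒) := by
  choose! s hs hs0 hsfr using h
  refine ⟨⋃ C ∈ 𝓒, s C, hfin.biUnion hs, fun p hp => ?_, fun x hx => ?_⟩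
  · obtain ⟨C, hC, hpC⟩ := mem_iUnion₂.1 hp
    exact hs0 C hC p hpC
  · have hU : IsClosed (⋃₀ 𝓒) := sUnion_eq_biUnion ▸ hfin.isClosed_biUnion hclosed
    obtain ⟨C, hC, hxC⟩ := hU.frontier_subset hx
    have hxfr : x ∈ frontier C :=
      ⟨subset_closure hxC, fun h => hx.2 (interior_mono (subset_sUnion_of_mem hC) h)⟩
    obtain ⟨p, hp, hpx⟩ := hsfr C hC x hxfr
    exact ⟨p, mem_biUnion hC hp, hpx⟩

local notation "ℝⁿ" => EuclideanSpace ℝ (Fin n)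

theorem properlySupporting_of_eventually_frontier {W : Set ℝⁿ} (hW : W = closure (interior W))
    {f : ℝⁿ →ₗ[ℝ] ℝ} (hf : f ≠ 0) {c : ℝ} {y : ℝⁿ} (hy : y ∈ frontier W) (hyc : f y = c)
    (hloc : ∀ᶠ z in 𝓝 y, z ∈ frontier W → f z = c) :
    ProperlySupporting W {x | f x = c} := by
  obtain ⟨ε, hε, hball⟩ := Metric.eventually_nhds_iff_ball.1 hloc
  set V := Metric.ball y ε
  have hWc : IsClosed W := hW ▸ isClosed_closure
  have side : ∀ s : Set ℝ, c ∉ s → Convex ℝ s →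
      V ∩ f ⁻¹' closure s ⊆ W ∨ Disjoint (V ∩ f ⁻¹' s) W := by
    intro s hcs hs
    have hdisj : Disjoint (V ∩ f ⁻¹' s) (frontier W) :=
      disjoint_left.2 fun z hz hzW => hcs (hball z hz.1 hzW ▸ hz.2)
    refine (((convex_ball y ε).inter (hs.linear_preimage f)).isPreconnected
      |>.subset_or_disjoint_of_disjoint_frontier hdisj).imp (fun h => ?_) id
    rw [← f.closure_preimage_of_ne_zero hf]
    exact Metric.isOpen_ball.inter_closure.trans (closure_minimal h hWc)
  have hL := side (Iio c) (lt_irrefl c) (convex_Iio c)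
  have hR := side (Ioi c) (lt_irrefl c) (convex_Ioi c)
  rw [closure_Iio] at hL
  rw [closure_Ioi] at hR
  rcases hL with hL | hL <;> rcases hR with hR | hR
  · refine absurd (mem_interior_iff_mem_nhds.2 <|
      mem_of_superset (Metric.ball_mem_nhds y hε) fun z hz => ?_) hy.2
    rcases le_total (f z) c with h | h
    exacts [hL ⟨hz, h⟩, hR ⟨hz, h⟩]
  · refine ⟨f, c, hf, rfl, y, hyc, V, Metric.isOpen_ball, Metric.mem_ball_self hε,
      Or.inl (ext fun z => ⟨fun ⟨hzW, hzV⟩ => ⟨?_, hzV⟩, fun ⟨hz, hzV⟩ => ⟨hL ⟨hzV, hz⟩, hzV⟩⟩)⟩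
    exact not_lt.1 fun (h : c < f z) => hR.ne_of_mem ⟨hzV, h⟩ hzW rfl
  · refine ⟨f, c, hf, rfl, y, hyc, V, Metric.isOpen_ball, Metric.mem_ball_self hε,
      Or.inr (ext fun z => ⟨fun ⟨hzW, hzV⟩ => ⟨?_, hzV⟩, fun ⟨hz, hzV⟩ => ⟨hR ⟨hzV, hz⟩, hzV⟩⟩)⟩
    exact not_lt.1 fun (h : f z < c) => hL.ne_of_mem ⟨hzV, h⟩ hzW rfl
  · -- then `interior W ∩ V` would be a nonempty open subset of the hyperplane
    have hsub : interior W ∩ V ⊆ {x | f x = c} := fun z ⟨hzW, hzV⟩ =>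
      le_antisymm (not_lt.1 fun h => hR.ne_of_mem ⟨hzV, h⟩ (interior_subset hzW) rfl)
        (not_lt.1 fun h => hL.ne_of_mem ⟨hzV, h⟩ (interior_subset hzW) rfl)
    have hyW : y ∈ closure (interior W) := by
      have := hy.1
      rwa [hW, closure_closure] at this
    obtain ⟨z, hzWV, hz⟩ := (f.dense_setOf_ne hf c).inter_open_nonempty _
      (isOpen_interior.inter Metric.isOpen_ball)
      (inter_comm V _ ▸ mem_closure_iff.1 hyW V Metric.isOpen_ball (Metric.mem_ball_self hε))
    exact (hz (hsub hzWV)).elim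

theorem properlySupporting_of_unique_hyperplane {W : Set ℝⁿ} (hW : W = closure (interior W))
    {s : Set ((ℝⁿ →ₗ[ℝ] ℝ) × ℝ)} (hs : s.Finite) (hs0 : ∀ p ∈ s, p.1 ≠ 0)
    (hfr : ∀ x ∈ frontier W, ∃ p ∈ s, p.1 x = p.2) {y : ℝⁿ} (hy : y ∈ frontier W)
    {p : (ℝⁿ →ₗ[ℝ] ℝ) × ℝ} (hp : p ∈ s) (hyp : p.1 y = p.2)
    (huniq : ∀ q ∈ s, q.1 y = q.2 → {x | q.1 x = q.2} = {x | p.1 x = p.2}) :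
    ProperlySupporting W {x | p.1 x = p.2} := by
  refine properlySupporting_of_eventually_frontier hW (hs0 p hp) hy hyp ?_
  have hnear : ∀ᶠ z in 𝓝 y, ∀ q ∈ s, {x | q.1 x = q.2} ≠ {x | p.1 x = p.2} → q.1 z ≠ q.2 :=
    (eventually_all_finite hs).2 fun q hq => by
      by_cases hqp : {x | q.1 x = q.2} = {x | p.1 x = p.2}
      · exact Eventually.of_forall fun _ h => absurd hqp h
      · exact (q.1.continuous_of_finiteDimensional.continuousAt.eventually_ne
          fun h => hqp (huniq q hq h)).mono fun _ h _ => h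
  filter_upwards [hnear] with z hz hzfr
  obtain ⟨q, hq, hzq⟩ := hfr z hzfr
  by_cases hqp : {x | q.1 x = q.2} = {x | p.1 x = p.2}
  · exact (hqp ▸ hzq : z ∈ {x | p.1 x = p.2})
  · exact absurd hzq (hz q hq hqp)

theorem exists_properlySupporting_of_mem_frontier {W : Set ℝⁿ}
    (hW : W = closure (interior W)) {s : Set ((ℝⁿ →ₗ[ℝ] ℝ) × ℝ)} (hs : s.Finite)
    (hs0 : ∀ p ∈ s, p.1 ≠ 0) (hfr : ∀ x ∈ frontier W, ∃ p ∈ s, p.1 x = p.2) {x : ℝⁿ}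
    (hx : x ∈ frontier W) : ∃ p ∈ s, p.1 x = p.2 ∧ ProperlySupporting W {y | p.1 y = p.2} := by
  by_contra! hcon
  have hnear : ∀ᶠ z in 𝓝 x, ∀ p ∈ s, ProperlySupporting W {y | p.1 y = p.2} → p.1 z ≠ p.2 :=
    (eventually_all_finite hs).2 fun p hp => by
      by_cases hps : ProperlySupporting W {y | p.1 y = p.2}
      · exact (p.1.continuous_of_finiteDimensional.continuousAt.eventually_ne
          fun h => hcon p hp h hps).mono fun _ h _ => h
      · exact Eventually.of_forall fun _ h => absurd h hps
  obtain ⟨ε, hε, hball⟩ := Metric.eventually_nhds_iff_ball.1 hnear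
  set B := Metric.ball x ε
  have htwo : ∀ w ∈ B ∩ frontier W, ∃ p ∈ s, ∃ q ∈ s, p.1 w = p.2 ∧ q.1 w = q.2 ∧
      {y | p.1 y = p.2} ≠ {y | q.1 y = q.2} := by
    rintro w ⟨hwB, hw⟩
    obtain ⟨p, hp, hwp⟩ := hfr w hw
    by_contra! h
    exact hball w hwB p hp (properlySupporting_of_unique_hyperplane hW hs hs0 hfr hw hp hwp
      fun q hq hwq => h q hq p hp hwq hwp) hwp
  have hWc : IsClosed W := hW ▸ isClosed_closure
  have hxW : x ∈ closure (interior W) := by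
    have := hx.1
    rwa [hW, closure_closure] at this
  obtain ⟨a, ⟨haW, haB⟩, has⟩ := (dense_setOf_forall_ne hs hs0 Prod.snd).inter_open_nonempty _
    (isOpen_interior.inter Metric.isOpen_ball)
    (inter_comm B _ ▸ mem_closure_iff.1 hxW B Metric.isOpen_ball (Metric.mem_ball_self hε))
  set P := {pq ∈ s ×ˢ s | {y | pq.1.1 y = pq.1.2} ≠ {y | pq.2.1 y = pq.2.2}}
  have hcone : ∀ pq ∈ P, ∃ φ : ℝⁿ →ₗ[ℝ] ℝ, φ ≠ 0 ∧
      ∀ z, pq.1.1 z = pq.1.2 → pq.2.1 z = pq.2.2 → φ z = φ a := fun pq hpq =>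
    LinearMap.exists_ne_zero_forall_eq_of_setOf_ne (hs0 _ hpq.1.2) hpq.2 (has _ hpq.1.1)
  choose! φ hφ0 hφ using hcone
  have hxWc : x ∈ closure Wᶜ := closure_compl (s := W) ▸ hx.2
  obtain ⟨b, ⟨hbW, hbB⟩, hbφ⟩ := (dense_setOf_forall_ne ((hs.prod hs).subset (sep_subset _ _)) hφ0
    fun pq => φ pq a).inter_open_nonempty _ (hWc.isOpen_compl.inter Metric.isOpen_ball)
    (inter_comm B _ ▸ mem_closure_iff.1 hxWc B Metric.isOpen_ball (Metric.mem_ball_self hε))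
  obtain ⟨w, hwab, hwfr⟩ := (convex_segment a b).isPreconnected.inter_frontier_nonempty
    ⟨a, left_mem_segment ℝ a b, interior_subset haW⟩ ⟨b, right_mem_segment ℝ a b, hbW⟩
  obtain ⟨p, hp, q, hq, hwp, hwq, hpq⟩ :=
    htwo w ⟨(convex_ball x ε).segment_subset haB hbB hwab, hwfr⟩
  have hPpq : (p, q) ∈ P := ⟨⟨hp, hq⟩, hpq⟩
  exact hbφ (p, q) hPpq ((φ (p, q)).apply_eq_of_mem_segment_of_ne hwab
    (fun h => has p hp (h ▸ hwp)) (hφ (p, q) hPpq w hwp hwq))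

theorem isPolytopal_iff {W : Set ℝⁿ} :
    IsPolytopal W ↔ IsCompact W ∧ W = closure (interior W) ∧ FrontierCoveredByHyperplanes W := by
  refine and_congr_right fun _ => and_congr_right fun hW => ⟨?_, ?_⟩
  · rintro ⟨𝓗, hfin, hsupp, hcover⟩
    unfold ProperlySupporting at hsupp
    choose! f c hf0 hfc _ using hsupp
    refine ⟨(fun H => (f H, c H)) '' 𝓗, hfin.image _, ?_, fun x hx => ?_⟩
    · rintro _ ⟨H, hH, rfl⟩
      exact hf0 H hH
    · obtain ⟨H, hH, hxH⟩ := hcover hx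
      rw [hfc H hH] at hxH
      exact ⟨_, mem_image_of_mem _ hH, hxH⟩
  · rintro ⟨s, hs, hs0, hfr⟩
    refine ⟨{H | ∃ p ∈ s, H = {y | p.1 y = p.2} ∧ ProperlySupporting W H},
      (hs.image fun p => {y | p.1 y = p.2}).subset ?_, ?_, fun x hx => ?_⟩
    · rintro _ ⟨p, hp, rfl, -⟩
      exact mem_image_of_mem _ hp
    · rintro _ ⟨p, -, rfl, h⟩
      exact h
    · obtain ⟨p, hp, hxp, hps⟩ := exists_properlySupporting_of_mem_frontier hW hs hs0 hfr hx
      exact ⟨_, ⟨p, hp, rfl, hps⟩, hxp⟩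

theorem exists_convexPolytope_mem_subset {W : Set ℝⁿ} (hWc : IsCompact W)
    {s : Set ((ℝⁿ →ₗ[ℝ] ℝ) × ℝ)} (hs : s.Finite) (hs0 : ∀ p ∈ s, p.1 ≠ 0)
    (hfr : ∀ x ∈ frontier W, ∃ p ∈ s, p.1 x = p.2) {x : ℝⁿ} (hxW : x ∈ W)
    (hxs : ∀ p ∈ s, p.1 x ≠ p.2) :
    ∃ C, (IsConvexPolytope C ∧ C ⊆ W ∧ ∃ t : Finset ((ℝⁿ →ₗ[ℝ] ℝ) × ℝ),
      ↑t ⊆ s ∪ Neg.neg '' s ∧ C = ⋂ q ∈ t, {y | q.1 y ≤ q.2}) ∧ x ∈ C := by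
  classical
  set orient : (ℝⁿ →ₗ[ℝ] ℝ) × ℝ → (ℝⁿ →ₗ[ℝ] ℝ) × ℝ := fun p => if p.1 x < p.2 then p else -p
  have horient : ∀ p ∈ s, (orient p).1 ≠ 0 ∧ (orient p).1 x < (orient p).2 ∧
      ∀ z, (orient p).1 z < (orient p).2 → p.1 z ≠ p.2 := by
    intro p hp
    by_cases h : p.1 x < p.2
    · simp only [orient, if_pos h]
      exact ⟨hs0 p hp, h, fun z hz => hz.ne⟩
    · simp only [orient, if_neg h, Prod.fst_neg, Prod.snd_neg, LinearMap.neg_apply, neg_lt_neg_iff,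
        ne_eq, neg_eq_zero]
      exact ⟨hs0 p hp, lt_of_le_of_ne (not_lt.1 h) (hxs p hp).symm, fun z hz => hz.ne'⟩
  set t := hs.toFinset.image orient
  have hts : ↑t ⊆ s ∪ Neg.neg '' s := by
    intro q hq
    obtain ⟨p, hp, rfl⟩ := Finset.mem_image.1 hq
    rw [hs.mem_toFinset] at hp
    by_cases h : p.1 x < p.2
    · exact Or.inl (by simpa [orient, h] using hp)
    · exact Or.inr ⟨p, hp, by simp [orient, h]⟩
  have ht : ∀ q ∈ t, q.1 ≠ 0 ∧ q.1 x < q.2 := by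
    intro q hq
    obtain ⟨p, hp, rfl⟩ := Finset.mem_image.1 hq
    exact ⟨(horient p (hs.mem_toFinset.1 hp)).1, (horient p (hs.mem_toFinset.1 hp)).2.1⟩
  set D := ⋂ q ∈ t, {y | q.1 y < q.2}
  have hxD : x ∈ D := mem_iInter₂.2 fun q hq => (ht q hq).2
  have hDW : D ⊆ W := by
    refine ((convex_biInter_setOf_lt t).isPreconnected
      |>.subset_or_disjoint_of_disjoint_frontier ?_).resolve_right
      (not_disjoint_iff.2 ⟨x, hxD, hxW⟩)
    refine disjoint_left.2 fun z hz hzfr => ?_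
    obtain ⟨p, hp, hzp⟩ := hfr z hzfr
    exact (horient p hp).2.2 z
      (mem_iInter₂.1 hz _ (Finset.mem_image_of_mem _ (hs.mem_toFinset.2 hp))) hzp
  have hCD := closure_biInter_setOf_lt (fun q hq => (ht q hq).1) ⟨x, hxD⟩
  have hCW : ⋂ q ∈ t, {y | q.1 y ≤ q.2} ⊆ W := hCD ▸ closure_minimal hDW hWc.isClosed
  refine ⟨_, ⟨⟨hWc.of_isClosed_subset (hCD ▸ isClosed_closure) hCW, ?_, t, rfl⟩, hCW, t, hts, rfl⟩,
    hCD ▸ subset_closure hxD⟩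
  rw [interior_biInter_setOf_le fun q hq => (ht q hq).1]
  exact ⟨x, hxD⟩

theorem FrontierCoveredByHyperplanes.exists_convexPolytopes {W : Set ℝⁿ}
    (hfr : FrontierCoveredByHyperplanes W) (hWc : IsCompact W) (hW : W = closure (interior W)) :
    ∃ 𝓒 : Set (Set ℝⁿ), 𝓒.Finite ∧ (∀ C ∈ 𝓒, IsConvexPolytope C) ∧ W = ⋃₀ 𝓒 := by
  obtain ⟨s, hs, hs0, hfr⟩ := hfr
  set 𝓒 := {C | IsConvexPolytope C ∧ C ⊆ W ∧ ∃ t : Finset ((ℝⁿ →ₗ[ℝ] ℝ) × ℝ),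
    ↑t ⊆ s ∪ Neg.neg '' s ∧ C = ⋂ q ∈ t, {y | q.1 y ≤ q.2}}
  have hfin : 𝓒.Finite :=
    ((hs.union (hs.image _)).finite_subsets.image fun u => ⋂ q ∈ u, {y : ℝⁿ | q.1 y ≤ q.2}).subset
      fun C ⟨_, _, t, ht, hC⟩ => ⟨t, ht, by simp [hC]⟩
  refine ⟨𝓒, hfin, fun C hC => hC.1, subset_antisymm ?_ (sUnion_subset fun C hC => hC.2.1)⟩
  have hgeneric : interior W ∩ {x | ∀ p ∈ s, p.1 x ≠ p.2} ⊆ ⋃₀ 𝓒 := fun x ⟨hxW, hxs⟩ =>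
    exists_convexPolytope_mem_subset hWc hs hs0 hfr (interior_subset hxW) hxs
  calc W = closure (interior W) := hW
    _ ⊆ closure (interior W ∩ {x | ∀ p ∈ s, p.1 x ≠ p.2}) :=
      closure_minimal ((dense_setOf_forall_ne hs hs0 Prod.snd).open_subset_closure_inter
        isOpen_interior) isClosed_closure
    _ ⊆ ⋃₀ 𝓒 := closure_minimal hgeneric (hfin.isCompact_sUnion fun C hC => hC.1.1).isClosed

theorem IsConvexPolytope.closure_interior {C : Set ℝⁿ} (hC : IsConvexPolytope C) :
    closure (interior C) = C := by
  obtain ⟨hCc, hint, t, rfl⟩ := hC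
  rw [(convex_biInter_setOf_le t).closure_interior_eq_closure_of_nonempty_interior hint,
    hCc.isClosed.closure_eq]

theorem IsConvexPolytope.frontierCoveredByHyperplanes {C : Set ℝⁿ} (hC : IsConvexPolytope C) :
    FrontierCoveredByHyperplanes C := by
  obtain ⟨hCc, -, t, rfl⟩ := hC
  refine ⟨{p ∈ ↑t | p.1 ≠ 0}, t.finite_toSet.sep _, fun p hp => hp.2, fun x hx => ?_⟩
  by_contra! h
  refine hx.2 ?_
  rw [Finset.interior_iInter]
  refine mem_iInter₂.2 fun p hp => ?_
  have hpx : p.1 x ≤ p.2 := mem_iInter₂.1 (hCc.isClosed.frontier_subset hx) p hp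
  by_cases hp0 : p.1 = 0
  · have : {y | p.1 y ≤ p.2} = univ := eq_univ_of_forall fun y => by simpa [hp0] using hpx
    simp [this]
  · exact interior_maximal (fun y (hy : p.1 y < p.2) => hy.le)
      (isOpen_lt p.1.continuous_of_finiteDimensional continuous_const)
      (lt_of_le_of_ne hpx (h p ⟨hp, hp0⟩))

/-- A subset `W ⊂ ℝⁿ` is polytopal iff it is a finite union of convex polytopes. -/
theorem isPolytopal_iff_finite_union_convexPolytopes
    (W : Set (EuclideanSpace ℝ (Fin n))) :
    IsPolytopal W ↔
      ∃ 𝓒 : Set (Set (EuclideanSpace ℝ (Fin n))), 𝓒.Finite ∧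
        (∀ C ∈ 𝓒, IsConvexPolytope C) ∧ W = ⋃₀ 𝓒 := by
  rw [isPolytopal_iff]
  constructor
  · rintro ⟨hWc, hW, hfr⟩
    exact hfr.exists_convexPolytopes hWc hW
  · rintro ⟨𝓒, hfin, hpoly, rfl⟩
    exact ⟨hfin.isCompact_sUnion fun C hC => (hpoly C hC).1,
      (closure_interior_sUnion hfin fun C hC => (hpoly C hC).closure_interior).symm,
      frontierCoveredByHyperplanes_sUnion hfin (fun C hC => (hpoly C hC).1.isClosed)
        fun C hC => (hpoly C hC).frontierCoveredByHyperplanes⟩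
end

section
/- Let Γ ≤ ℝᵏ be a lattice of rank k, X an n-dimensional subspace receiving a projection π_< injective on Γ, and f = {V₁,...,Vₙ} a flag of codimension-1 subspaces of X with trivial intersection. For each i let Γ^{Vᵢ} = {γ ∈ Γ : π_<(γ) ∈ Vᵢ}. Then the group ⋂ᵢ (Vᵢ + Γ_<) is isomorphic to the direct sum ⊕ᵢ Γ/Γ^{Vᵢ}, via sending the intersection point ⋂ᵢ(Vᵢ + π_<(γᵢ)) to ([γ₁],...,[γₙ]). In particular, the rank of ⋂ᵢ (Vᵢ + Γ_<) equals Σᵢ (k - rk(Γ^{Vᵢ})). -/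
open Pointwise

/-- finrank over ℤ is invariant under additive equivalences (for arbitrary
`ℤ`-module structures, which are unique anyway). -/
lemma finrank_eq_of_addEquiv {A B : Type*} [AddCommGroup A] [AddCommGroup B]
    {iA : Module ℤ A} {iB : Module ℤ B} (e : A ≃+ B) :
    Module.finrank ℤ A = Module.finrank ℤ B := by
  haveI : Unique (Module ℤ A) := AddCommGroup.uniqueIntModule
  haveI : Unique (Module ℤ B) := AddCommGroup.uniqueIntModule
  obtain rfl : iA = AddCommGroup.toIntModule A := Subsingleton.elim _ _
  obtain rfl : iB = AddCommGroup.toIntModule B := Subsingleton.elim _ _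
  exact e.toIntLinearEquiv.finrank_eq

/-- `Module.Finite` over ℤ transfers along additive equivalences. -/
lemma finite_of_addEquiv {A B : Type*} [AddCommGroup A] [AddCommGroup B]
    {iA : Module ℤ A} {iB : Module ℤ B} (hA : Module.Finite ℤ A) (e : A ≃+ B) :
    Module.Finite ℤ B := by
  haveI : Unique (Module ℤ A) := AddCommGroup.uniqueIntModule
  haveI : Unique (Module ℤ B) := AddCommGroup.uniqueIntModule
  obtain rfl : iA = AddCommGroup.toIntModule A := Subsingleton.elim _ _
  obtain rfl : iB = AddCommGroup.toIntModule B := Subsingleton.elim _ _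
  exact Module.Finite.equiv e.toIntLinearEquiv

/-- Let `Γ ≅ ℤᵏ` be a lattice in `E = E₁ × X`, with the projection to `X` injective on `Γ`
and `Γ_<` dense in the `n`-dimensional space `X`. Let `V₁, ..., Vₙ` be a flag of
codimension-1 subspaces of `X` (trivial intersection) with stabilisers
`Γ^{Vᵢ} = {γ ∈ Γ : π_<(γ) ∈ Vᵢ}`. Then the group `H` with carrier `⋂ᵢ (Vᵢ + Γ_<)` is
isomorphic to `⊕ᵢ Γ/Γ^{Vᵢ}` via sending `⋂ᵢ (Vᵢ + π_<(γᵢ))` to `([γ₁], ..., [γₙ])`;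
in particular `rk H = Σᵢ (k - rk Γ^{Vᵢ})`. -/
theorem flag_group_iso_direct_sum_of_quotients
    {E₁ X : Type*} [AddCommGroup E₁] [Module ℝ E₁]
    [NormedAddCommGroup X] [NormedSpace ℝ X] [FiniteDimensional ℝ X]
    {k n : ℕ} (hn : Module.finrank ℝ X = n)
    (Γ : AddSubgroup (E₁ × X)) (eΓ : Γ ≃+ (Fin k → ℤ))
    (hinj : ∀ γ γ' : Γ, (γ : E₁ × X).2 = (γ' : E₁ × X).2 → γ = γ')
    (hdense : Dense ((Γ.map (AddMonoidHom.snd E₁ X) : AddSubgroup X) : Set X))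
    (V : Fin n → Submodule ℝ X)
    (hcodim : ∀ i, Module.finrank ℝ (V i) = n - 1)
    (hflag : (⨅ i, V i) = ⊥)
    (ΓV : Fin n → AddSubgroup Γ)
    (hΓV : ∀ i, ∀ γ : Γ, γ ∈ ΓV i ↔ (γ : E₁ × X).2 ∈ V i)
    (H : AddSubgroup X)
    (hH : (H : Set X) =
      ⋂ i, ((V i : Set X) + ((Γ.map (AddMonoidHom.snd E₁ X) : AddSubgroup X) : Set X))) :
    (∃ e : H ≃+ (∀ i, Γ ⧸ ΓV i),
      ∀ (h : H) (γ : Fin n → Γ),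
        (∀ i, (h : X) - (γ i : E₁ × X).2 ∈ V i) →
          ∀ i, e h i = QuotientAddGroup.mk (γ i)) ∧
    Module.finrank ℤ H = ∑ i, (k - Module.finrank ℤ (ΓV i)) := by
  classical
  -- the homomorphisms `γ ↦ π_<(γ) mod V i`
  set φ : ∀ i : Fin n, Γ →+ (X ⧸ V i) := fun i =>
    ((V i).mkQ.toAddMonoidHom).comp ((AddMonoidHom.snd E₁ X).comp Γ.subtype) with hφ
  have hker : ∀ i, (φ i).ker = ΓV i := by
    intro i
    ext γ
    simp [AddMonoidHom.mem_ker, hφ, Submodule.Quotient.mk_eq_zero, hΓV i γ]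
  -- the linear map `X → ∏ i, X ⧸ V i` is bijective
  set q : X →ₗ[ℝ] ∀ i, X ⧸ V i := LinearMap.pi (fun i => (V i).mkQ) with hq
  have hqinj : Function.Injective q := by
    rw [← LinearMap.ker_eq_bot, hq, LinearMap.ker_pi]
    simpa [Submodule.ker_mkQ] using hflag
  have hq1 : ∀ i : Fin n, Module.finrank ℝ (X ⧸ V i) = 1 := by
    intro i
    have h1 := Submodule.finrank_quotient_add_finrank (V i)
    rw [hcodim i, hn] at h1
    have : 0 < n := i.pos
    omega
  have hfr : Module.finrank ℝ X = Module.finrank ℝ (∀ i, X ⧸ V i) := by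
    rw [Module.finrank_pi_fintype, hn]
    simp [hq1]
  have hqsurj : Function.Surjective q :=
    (LinearMap.injective_iff_surjective_of_finrank_eq_finrank hfr).mp hqinj
  set qe : X ≃ₗ[ℝ] ∀ i, X ⧸ V i := LinearEquiv.ofBijective q ⟨hqinj, hqsurj⟩ with hqe
  -- membership in H
  have hmemH : ∀ x : X, x ∈ H ↔ ∀ i, ∃ γ : Γ, x - (γ : E₁ × X).2 ∈ V i := by
    intro x
    constructor
    · intro hx i
      have hx' : x ∈ (H : Set X) := hx
      rw [hH] at hx'
      obtain ⟨v, hv, g, hg, hvg⟩ := Set.mem_iInter.mp hx' i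
      obtain ⟨γ, hγΓ, hγg⟩ := hg
      refine ⟨⟨γ, hγΓ⟩, ?_⟩
      show x - γ.2 ∈ V i
      rw [← hvg, ← hγg]
      simpa [add_sub_cancel_right] using hv
    · intro hx
      show x ∈ (H : Set X)
      rw [hH]
      refine Set.mem_iInter.mpr fun i => ?_
      obtain ⟨γ, hγ⟩ := hx i
      exact ⟨x - (γ : E₁ × X).2, hγ, (γ : E₁ × X).2,
        ⟨(γ : E₁ × X), γ.2, rfl⟩, sub_add_cancel x _⟩
  -- range membership for elements of H
  have hrange : ∀ (h : H) (i : Fin n), (V i).mkQ (h : X) ∈ (φ i).range := by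
    intro h i
    obtain ⟨γ, hγ⟩ := (hmemH h).mp h.2 i
    refine ⟨γ, ?_⟩
    show (V i).mkQ (γ : E₁ × X).2 = (V i).mkQ (h : X)
    have : (V i).mkQ ((h : X) - (γ : E₁ × X).2) = 0 :=
      (Submodule.Quotient.mk_eq_zero _).mpr hγ
    rw [map_sub, sub_eq_zero] at this
    exact this.symm
  -- the isomorphisms `Γ ⧸ ΓV i ≃+ range (φ i)`
  set E : ∀ i : Fin n, (Γ ⧸ ΓV i) ≃+ (φ i).range := fun i =>
    (QuotientAddGroup.quotientAddEquivOfEq (hker i).symm).trans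
      (QuotientAddGroup.quotientKerEquivRange (φ i)) with hE
  have hE_mk : ∀ (i : Fin n) (γ : Γ),
      ((E i (QuotientAddGroup.mk γ) : (φ i).range) : X ⧸ V i)
        = (V i).mkQ (γ : E₁ × X).2 := fun i γ => rfl
  -- membership of the inverse map's value in H
  have hmemInv : ∀ c : (∀ i, Γ ⧸ ΓV i),
      qe.symm (fun i => ((E i (c i) : (φ i).range) : X ⧸ V i)) ∈ H := by
    intro c
    set y : ∀ i, X ⧸ V i := fun i => ((E i (c i) : (φ i).range) : X ⧸ V i) with hy
    rw [hmemH]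
    intro i
    obtain ⟨γ, hγ⟩ := (E i (c i)).2
    refine ⟨γ, ?_⟩
    rw [← Submodule.Quotient.mk_eq_zero (V i)]
    have h1 : Submodule.Quotient.mk (p := V i) (qe.symm y) = y i :=
      congrFun (qe.apply_symm_apply y) i
    have h2 : Submodule.Quotient.mk (p := V i) ((γ : E₁ × X).2) = y i := hγ
    rw [Submodule.Quotient.mk_sub, h1, h2, sub_self]
  refine ⟨⟨⟨⟨fun h i => (E i).symm ⟨(V i).mkQ (h : X), hrange h i⟩,
      fun c => ⟨qe.symm (fun i => ((E i (c i) : (φ i).range) : X ⧸ V i)), hmemInv c⟩,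
      ?_, ?_⟩, ?_⟩, ?_⟩, ?_⟩
  · -- left inverse
    intro h
    apply Subtype.ext
    show qe.symm (fun i => ((E i ((E i).symm ⟨(V i).mkQ (h : X), hrange h i⟩)
        : (φ i).range) : X ⧸ V i)) = (h : X)
    have : (fun i => ((E i ((E i).symm ⟨(V i).mkQ (h : X), hrange h i⟩)
        : (φ i).range) : X ⧸ V i)) = qe (h : X) := by
      funext i
      rw [(E i).apply_symm_apply]
      rfl
    rw [this, qe.symm_apply_apply]
  · -- right inverse
    intro c
    funext i
    rw [(E i).symm_apply_eq]
    apply Subtype.ext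
    show (V i).mkQ (qe.symm (fun j => ((E j (c j) : (φ j).range) : X ⧸ V j)))
      = ((E i (c i) : (φ i).range) : X ⧸ V i)
    exact congrFun (qe.apply_symm_apply (fun j => ((E j (c j) : (φ j).range) : X ⧸ V j))) i
  · -- additivity
    intro h h'
    funext i
    show (E i).symm ⟨(V i).mkQ ((h + h' : H) : X), hrange (h + h') i⟩
      = (E i).symm ⟨(V i).mkQ (h : X), hrange h i⟩ + (E i).symm ⟨(V i).mkQ (h' : X), hrange h' i⟩
    rw [← map_add]
    congr 1
  · -- the explicit description of the equivalence
    intro h γ hγ i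
    show (E i).symm ⟨(V i).mkQ (h : X), hrange h i⟩ = QuotientAddGroup.mk (γ i)
    rw [(E i).symm_apply_eq]
    apply Subtype.ext
    rw [hE_mk]
    show Submodule.Quotient.mk ((h : X)) = Submodule.Quotient.mk ((γ i : E₁ × X).2)
    exact (Submodule.Quotient.eq (V i)).mpr (hγ i)
  · -- the rank computation
    have hrk : Module.finrank ℤ H = Module.finrank ℤ (∀ i, Γ ⧸ ΓV i) :=
      finrank_eq_of_addEquiv
        ⟨⟨fun h i => (E i).symm ⟨(V i).mkQ (h : X), hrange h i⟩,
          fun c => ⟨qe.symm (fun i => ((E i (c i) : (φ i).range) : X ⧸ V i)), hmemInv c⟩,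
          ?_, ?_⟩, ?_⟩
    rotate_left
    · intro h
      apply Subtype.ext
      show qe.symm (fun i => ((E i ((E i).symm ⟨(V i).mkQ (h : X), hrange h i⟩)
          : (φ i).range) : X ⧸ V i)) = (h : X)
      have : (fun i => ((E i ((E i).symm ⟨(V i).mkQ (h : X), hrange h i⟩)
          : (φ i).range) : X ⧸ V i)) = qe (h : X) := by
        funext i
        rw [(E i).apply_symm_apply]
        rfl
      rw [this, qe.symm_apply_apply]
    · intro c
      funext i
      rw [(E i).symm_apply_eq]
      apply Subtype.ext
      show (V i).mkQ (qe.symm (fun j => ((E j (c j) : (φ j).range) : X ⧸ V j)))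
        = ((E i (c i) : (φ i).range) : X ⧸ V i)
      exact congrFun (qe.apply_symm_apply (fun j => ((E j (c j) : (φ j).range) : X ⧸ V j))) i
    · intro h h'
      funext i
      show (E i).symm ⟨(V i).mkQ ((h + h' : H) : X), hrange (h + h') i⟩
        = (E i).symm ⟨(V i).mkQ (h : X), hrange h i⟩
          + (E i).symm ⟨(V i).mkQ (h' : X), hrange h' i⟩
      rw [← map_add]
      congr 1
    have hΓfin : Module.Finite ℤ Γ := Module.Finite.equiv eΓ.toIntLinearEquiv.symm
    have hΓrank : Module.finrank ℤ Γ = k := by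
      rw [eΓ.toIntLinearEquiv.finrank_eq]
      simp [Module.finrank_pi]
    have hqmod : ∀ i, Module.finrank ℤ (Γ ⧸ ΓV i) = k - Module.finrank ℤ (ΓV i) := by
      intro i
      have hqeq : Module.finrank ℤ (Γ ⧸ ΓV i)
          = Module.finrank ℤ (Γ ⧸ (AddSubgroup.toIntSubmodule (ΓV i))) :=
        finrank_eq_of_addEquiv (AddEquiv.refl _)
      have h1 := Submodule.finrank_quotient_add_finrank (AddSubgroup.toIntSubmodule (ΓV i))
      rw [hΓrank] at h1
      have h2 : Module.finrank ℤ (AddSubgroup.toIntSubmodule (ΓV i))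
          = Module.finrank ℤ (ΓV i) := finrank_eq_of_addEquiv (AddEquiv.refl _)
      omega
    have hfinq : ∀ i, Module.Finite ℤ (Γ ⧸ ΓV i) := by
      intro i
      have h0 : Module.Finite ℤ (Γ ⧸ (AddSubgroup.toIntSubmodule (ΓV i))) :=
        Module.Finite.quotient ℤ _
      exact finite_of_addEquiv h0
        (AddEquiv.refl ((Γ ⧸ (AddSubgroup.toIntSubmodule (ΓV i))) : Type _))
    have hfree : ∀ i, Module.Free ℤ (Γ ⧸ ΓV i) := by
      intro i
      have hfin : Module.Finite ℤ (Γ ⧸ ΓV i) := hfinq i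
      have htf : NoZeroSMulDivisors ℤ (Γ ⧸ ΓV i) := by
        constructor
        rintro c x hcx
        by_contra hcon
        push_neg at hcon
        obtain ⟨hc, hx⟩ := hcon
        obtain ⟨γ, rfl⟩ := QuotientAddGroup.mk_surjective x
        have hmm : ((c • γ : Γ) : Γ ⧸ ΓV i) = 0 := by
          rw [show ((c • γ : Γ) : Γ ⧸ ΓV i) = c • (γ : Γ ⧸ ΓV i) from
            map_zsmul (QuotientAddGroup.mk' (ΓV i)) c γ]
          exact hcx
        have hmem : c • γ ∈ ΓV i := (QuotientAddGroup.eq_zero_iff _).mp hmm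
        rw [hΓV] at hmem
        have hsm : ((c • γ : Γ) : E₁ × X).2 = (c : ℝ) • (γ : E₁ × X).2 := by
          rw [Int.cast_smul_eq_zsmul]
          rfl
        rw [hsm] at hmem
        have hcre : (c : ℝ) ≠ 0 := Int.cast_ne_zero.mpr hc
        have hmem2 : (γ : E₁ × X).2 ∈ V i := by
          have := (V i).smul_mem (c : ℝ)⁻¹ hmem
          rwa [inv_smul_smul₀ hcre] at this
        exact hx ((QuotientAddGroup.eq_zero_iff γ).mpr ((hΓV i γ).mpr hmem2))
      exact Module.free_of_finite_type_torsion_free'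
    rw [hrk, Module.finrank_pi_fintype]
    exact Finset.sum_congr rfl fun i _ => hqmod i
end

section
/- Linear repetitivity implies low complexity: if Λ ⊂ ℝᵈ is a Delone set (uniformly discrete and relatively dense) whose repetitivity function satisfies ρ(r) ≤ C·r for all r ≥ 1, then its patch counting function satisfies p(r) ≤ C'·rᵈ for all r ≥ 1 and some constant C'. -/
/-- The `r`-patch of a point set `Λ` at `x`: the points of `Λ` within distance `r` of `x`,
translated so that `x` sits at the origin. -/
def patch {d : ℕ} (Λ : Set (EuclideanSpace ℝ (Fin d))) (r : ℝ)
    (x : EuclideanSpace ℝ (Fin d)) : Set (EuclideanSpace ℝ (Fin d)) :=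
  (fun y => y - x) '' (Λ ∩ Metric.closedBall x r)

/-- Linear repetitivity implies low complexity: if `Λ ⊂ ℝᵈ` is a Delone set whose patches
of any radius `r ≥ 1` all occur within distance `C·r` of every point of `Λ`, then the
number of distinct `r`-patches is at most `C'·rᵈ` for some constant `C'`. -/
theorem low_complexity_of_linear_repetitivity {d : ℕ}
    (Λ : Set (EuclideanSpace ℝ (Fin d)))
    (s S : ℝ) (hs : 0 < s) (hsS : s < S)
    (hud : ∀ x ∈ Λ, ∀ y ∈ Λ, x ≠ y → s ≤ dist x y)
    (hrd : ∀ x : EuclideanSpace ℝ (Fin d), ∃ y ∈ Λ, dist x y ≤ S)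
    (hFLC : ∀ r : ℝ, {P | ∃ x ∈ Λ, P = patch Λ r x}.Finite)
    (C : ℝ) (hC : 0 < C)
    (hLR : ∀ r : ℝ, 1 ≤ r → ∀ x ∈ Λ, ∀ x' ∈ Λ,
      ∃ y ∈ Λ, dist x y ≤ C * r ∧ patch Λ r y = patch Λ r x') :
    ∃ C' : ℝ, 0 < C' ∧ ∀ r : ℝ, 1 ≤ r →
      (({P | ∃ x ∈ Λ, P = patch Λ r x}.ncard : ℝ)) ≤ C' * r ^ d := by
  classical
  set u : ℝ := s / 2 with hu_def
  have hu : 0 < u := half_pos hs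
  refine ⟨((C + u) / u) ^ d, by positivity, ?_⟩
  intro r hr
  have hrpos : (0 : ℝ) < r := lt_of_lt_of_le one_pos hr
  obtain ⟨x0, hx0, -⟩ := hrd 0
  set F := {P | ∃ x ∈ Λ, P = patch Λ r x} with hF_def
  have hF : F.Finite := hFLC r
  -- choose representatives within distance C*r of x0
  have hrep : ∀ P ∈ F, ∃ y, y ∈ Λ ∧ dist x0 y ≤ C * r ∧ patch Λ r y = P := by
    rintro P ⟨x, hx, rfl⟩
    obtain ⟨y, hy, hdy, hpy⟩ := hLR r hr x0 hx0 x hx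
    exact ⟨y, hy, hdy, hpy⟩
  choose! g hg1 hg2 hg3 using hrep
  set Ff := hF.toFinset with hFf_def
  have hmemFf : ∀ P, P ∈ Ff ↔ P ∈ F := fun P => hF.mem_toFinset
  set Yf := Ff.image g with hYf_def
  have hinj : Set.InjOn g Ff := by
    intro P hP Q hQ hPQ
    rw [← hg3 P ((hmemFf P).1 hP), ← hg3 Q ((hmemFf Q).1 hQ), hPQ]
  have hcard : Yf.card = Ff.card := Finset.card_image_of_injOn hinj
  have hYΛ : ∀ y ∈ Yf, y ∈ Λ := by
    intro y hy
    obtain ⟨P, hP, rfl⟩ := Finset.mem_image.1 hy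
    exact hg1 P ((hmemFf P).1 hP)
  have hYdist : ∀ y ∈ Yf, dist x0 y ≤ C * r := by
    intro y hy
    obtain ⟨P, hP, rfl⟩ := Finset.mem_image.1 hy
    exact hg2 P ((hmemFf P).1 hP)
  -- disjoint balls of radius u around points of Yf
  have hdisj : (Yf : Set (EuclideanSpace ℝ (Fin d))).PairwiseDisjoint
      (fun y => Metric.ball y u) := by
    intro y hy z hz hyz
    apply Metric.ball_disjoint_ball
    have := hud y (hYΛ y hy) z (hYΛ z hz) hyz
    linarith
  have hsub : (⋃ y ∈ Yf, Metric.ball y u) ⊆ Metric.closedBall x0 (C * r + u) := by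
    intro z hz
    simp only [Set.mem_iUnion] at hz
    obtain ⟨y, hy, hzy⟩ := hz
    rw [Metric.mem_ball] at hzy
    rw [Metric.mem_closedBall]
    calc dist z x0 ≤ dist z y + dist y x0 := dist_triangle _ _ _
      _ ≤ u + C * r := by
          have := hYdist y hy
          rw [dist_comm] at this
          linarith [hzy.le]
      _ = C * r + u := add_comm _ _
  -- measure computation
  set μ := (MeasureTheory.volume : MeasureTheory.Measure (EuclideanSpace ℝ (Fin d)))
  set ν := μ (Metric.ball (0 : EuclideanSpace ℝ (Fin d)) 1) with hν_def
  have hν0 : ν ≠ 0 := (Metric.measure_ball_pos μ _ one_pos).ne'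
  have hνtop : ν ≠ ⊤ := MeasureTheory.measure_ball_lt_top.ne
  have hfin : Module.finrank ℝ (EuclideanSpace ℝ (Fin d)) = d :=
    finrank_euclideanSpace_fin
  have hballs : ∀ y : EuclideanSpace ℝ (Fin d),
      μ (Metric.ball y u) = ENNReal.ofReal (u ^ d) * ν := by
    intro y
    rw [MeasureTheory.Measure.addHaar_ball_of_pos μ y hu, hfin]
  have hbig : μ (Metric.closedBall x0 (C * r + u)) =
      ENNReal.ofReal ((C * r + u) ^ d) * ν := by
    rw [MeasureTheory.Measure.addHaar_closedBall μ x0 (by positivity), hfin]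
  have hmeas : (Yf.card : ENNReal) * (ENNReal.ofReal (u ^ d) * ν) ≤
      ENNReal.ofReal ((C * r + u) ^ d) * ν := by
    calc (Yf.card : ENNReal) * (ENNReal.ofReal (u ^ d) * ν)
        = ∑ y ∈ Yf, μ (Metric.ball y u) := by
          rw [Finset.sum_congr rfl (fun y _ => hballs y), Finset.sum_const, nsmul_eq_mul]
      _ = μ (⋃ y ∈ Yf, Metric.ball y u) :=
          (MeasureTheory.measure_biUnion_finset hdisj
            (fun y _ => measurableSet_ball)).symm
      _ ≤ μ (Metric.closedBall x0 (C * r + u)) := MeasureTheory.measure_mono hsub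
      _ = _ := hbig
  -- cancel ν and convert to reals
  have hmeas2 : (Yf.card : ENNReal) * ENNReal.ofReal (u ^ d) ≤
      ENNReal.ofReal ((C * r + u) ^ d) := by
    rw [← ENNReal.mul_le_mul_iff_left hν0 hνtop, mul_assoc]
    exact hmeas
  have hreal : (Yf.card : ℝ) * u ^ d ≤ (C * r + u) ^ d := by
    have h1 : (Yf.card : ENNReal) * ENNReal.ofReal (u ^ d) =
        ENNReal.ofReal ((Yf.card : ℝ) * u ^ d) := by
      rw [ENNReal.ofReal_mul (by positivity), ENNReal.ofReal_natCast]
    rw [h1] at hmeas2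
    exact (ENNReal.ofReal_le_ofReal_iff (by positivity)).1 hmeas2
  -- conclude
  have hkey : (Yf.card : ℝ) ≤ ((C + u) / u) ^ d * r ^ d := by
    have h2 : (C * r + u) ^ d ≤ ((C + u) * r) ^ d := by
      apply pow_le_pow_left₀ (by positivity)
      nlinarith
    have h3 : (Yf.card : ℝ) * u ^ d ≤ ((C + u) / u) ^ d * r ^ d * u ^ d := by
      calc (Yf.card : ℝ) * u ^ d ≤ ((C + u) * r) ^ d := hreal.trans h2
        _ = ((C + u) / u) ^ d * r ^ d * u ^ d := by
            rw [div_pow, mul_pow]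
            field_simp
    exact le_of_mul_le_mul_right h3 (by positivity)
  have hncard : F.ncard = Yf.card := by
    rw [Set.ncard_eq_toFinset_card F hF, ← hFf_def, hcard]
  calc (F.ncard : ℝ) = (Yf.card : ℝ) := by rw [hncard]
    _ ≤ ((C + u) / u) ^ d * r ^ d := hkey
end
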